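/- Let P be a saturated assignment in which every type-1 vertex is integrated and suppose y is a non-integrated type-2 vertex and x is any type-1 vertex. Then |N(y) ∩ U_2(P)| ≤ |Γ_x(P)|, where U_2(P) is the set of non-integrated type-2 vertices and Γ_x(P) is the set of type-2 neighbors of x uniquely covered by x. -/

import Mathlib

open Finset
open scoped Classical

variable {V : Type*}

/-- A vertex `v` is integrated under assignment `P` (type-1 = `true`,
type-2 = `false`) if it has a neighbor of the other type. -/
def Integrated (G : SimpleGraph V) (P : V → Bool) (v : V) : Prop :=
  ∃ u, G.Adj v u ∧ P u ≠ P v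

/-- The index of agent integration: the number of integrated vertices. -/
noncomputable def IoA (G : SimpleGraph V) [Fintype V] (P : V → Bool) : ℕ :=
  (Finset.univ.filter fun v => Integrated G P v).card

/-- Swap the types of vertices `x` and `y`. -/
noncomputable def swapAssign (P : V → Bool) (x y : V) : V → Bool :=
  fun v => if v = x then P y else if v = y then P x else P v

/-- An assignment is saturated if no swap of types between a type-1 vertex and a
type-2 vertex strictly increases the number of integrated vertices. -/
def Saturated (G : SimpleGraph V) [Fintype V] (P : V → Bool) : Prop :=
  ∀ x y, P x = true → P y = false → IoA G (swapAssign P x y) ≤ IoA G P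

/-- `Gamma G P x`: the set of type-2 neighbors of the type-1 vertex `x` that are
uniquely covered by `x` (their only type-1 neighbor is `x`). -/
noncomputable def Gamma (G : SimpleGraph V) [Fintype V] (P : V → Bool)
    (x : V) : Finset V :=
  Finset.univ.filter fun z => G.Adj x z ∧ P z = false ∧
    ∀ x', G.Adj z x' → P x' = true → x' = x

/-!
Swap the types of `x` and `y`. Because `y` has no type-1 neighbour, the swap integrates `y`
(as soon as it has a non-integrated type-2 neighbour) and every non-integrated type-2
neighbour of `y`, while the only vertices that can stop being integrated are `x` itself and
the vertices of `Γ_x(P)`. Saturation says the gains do not outnumber the losses, so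
`|N(y) ∩ U₂(P)| + 1 ≤ |Γ_x(P)| + 1`.
-/

section Swap

variable {G : SimpleGraph V} {P : V → Bool} {x y : V}

@[simp]
lemma swapAssign_apply_right (P : V → Bool) (x y : V) : swapAssign P x y y = P x := by
  by_cases h : y = x <;> simp [swapAssign, h]

lemma swapAssign_apply_of_ne {v : V} (hvx : v ≠ x) (hvy : v ≠ y) :
    swapAssign P x y v = P v := by
  simp [swapAssign, hvx, hvy]

lemma not_integrated_iff {v : V} : ¬ Integrated G P v ↔ ∀ u, G.Adj v u → P u = P v := by
  simp [Integrated]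

lemma integrated_swapAssign_of_adj (hx : P x = true) {z : V}
    (hyz : G.Adj y z) (hz : P z = false) : Integrated G (swapAssign P x y) z := by
  have hzx : z ≠ x := by rintro rfl; simp_all
  refine ⟨y, hyz.symm, ?_⟩
  simp [swapAssign_apply_of_ne hzx hyz.ne', hx, hz]

lemma integrated_swapAssign_right (hx : P x = true) {z : V} (hyz : G.Adj y z)
    (hz : P z = false) (hzx : z ≠ x) : Integrated G (swapAssign P x y) y :=
  ⟨z, hyz, by simp [swapAssign_apply_of_ne hzx hyz.ne', hx, hz]⟩

lemma mem_gamma_of_not_integrated_swapAssign [Fintype V] (hx : P x = true)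
    (hy : P y = false) (hyni : ¬ Integrated G P y) {w : V} (hwx : w ≠ x)
    (hw : Integrated G P w) (hw' : ¬ Integrated G (swapAssign P x y) w) :
    w ∈ Gamma G P x := by
  have hwy : w ≠ y := by rintro rfl; exact hyni hw
  rw [not_integrated_iff, swapAssign_apply_of_ne hwx hwy] at hw'
  have hPw : P w = false := by
    by_contra! hPw
    obtain ⟨u, hwu, hPu⟩ := hw
    have huy : u ≠ y := by
      rintro rfl
      exact hyni ⟨w, hwu.symm, by simp_all⟩
    by_cases hux : u = x
    · subst hux; simp_all
    · have := hw' u hwu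
      rw [swapAssign_apply_of_ne hux huy] at this
      simp_all
  have hunique : ∀ x', G.Adj w x' → P x' = true → x' = x := by
    intro x' hwx' hPx'
    by_contra hx'x
    have hx'y : x' ≠ y := by rintro rfl; simp_all
    simpa [swapAssign_apply_of_ne hx'x hx'y, hPx', hPw] using hw' x' hwx'
  obtain ⟨u, hwu, hPu⟩ := hw
  have hux : u = x := hunique u hwu (by simpa [hPw] using hPu)
  subst hux
  simpa [Gamma, hPw, hwu.symm] using hunique

end Swap

theorem stmt15_general [Fintype V] (G : SimpleGraph V) (P : V → Bool)
    (hsat : Saturated G P)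
    (y : V) (hy : P y = false) (hyni : ¬ Integrated G P y)
    (x : V) (hx : P x = true) :
    (Finset.univ.filter fun z =>
        G.Adj y z ∧ P z = false ∧ ¬ Integrated G P z).card ≤
      (Gamma G P x).card := by
  set A := Finset.univ.filter fun z => G.Adj y z ∧ P z = false ∧ ¬ Integrated G P z
  obtain hA | ⟨z₀, hz₀⟩ := A.eq_empty_or_nonempty
  · simp [hA]
  set S := univ.filter (Integrated G P)
  set S' := univ.filter (Integrated G (swapAssign P x y))
  have hbalance : #(S' \ S) ≤ #(S \ S') :=
    card_sdiff_le_card_sdiff_iff.mpr (hsat x y hx hy)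
  have hgain : insert y A ⊆ S' \ S := by
    intro w hw
    obtain rfl | hwA := mem_insert.mp hw
    · simp only [A, mem_filter, mem_univ, true_and] at hz₀
      have hz₀x : z₀ ≠ x := by rintro rfl; simp_all
      simp [S, S', hyni, integrated_swapAssign_right hx hz₀.1 hz₀.2.1 hz₀x]
    · simp only [A, mem_filter, mem_univ, true_and] at hwA
      simp [S, S', hwA.2.2, integrated_swapAssign_of_adj hx hwA.1 hwA.2.1]
  have hloss : S \ S' ⊆ insert x (Gamma G P x) := by
    intro w hw
    simp only [S, S', mem_sdiff, mem_filter, mem_univ, true_and] at hw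
    by_cases hwx : w = x
    · exact hwx ▸ mem_insert_self _ _
    · exact mem_insert_of_mem (mem_gamma_of_not_integrated_swapAssign hx hy hyni hwx hw.1 hw.2)
  have hyA : y ∉ A := by simp [A]
  refine Nat.le_of_add_le_add_right (b := 1) ?_
  calc #A + 1 = #(insert y A) := (card_insert_of_notMem hyA).symm
    _ ≤ #(S' \ S) := card_le_card hgain
    _ ≤ #(S \ S') := hbalance
    _ ≤ #(insert x (Gamma G P x)) := card_le_card hloss
    _ ≤ #(Gamma G P x) + 1 := card_insert_le _ _

/-- Subcase 2.1: for a saturated assignment in which every type-1 vertex is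
integrated and every type-1 vertex uniquely covers some type-2 vertex, for every
non-integrated type-2 vertex `y` and every type-1 vertex `x`,
`|N(y) ∩ U₂(P)| ≤ |Γ_x(P)|`. -/
theorem stmt15 [Fintype V] (G : SimpleGraph V) (P : V → Bool)
    (hsat : Saturated G P)
    (hall1 : ∀ x, P x = true → Integrated G P x)
    (hΓ : ∀ x', P x' = true → (Gamma G P x').Nonempty)
    (y : V) (hy : P y = false) (hyni : ¬ Integrated G P y)
    (x : V) (hx : P x = true) :
    (Finset.univ.filter fun z =>
        G.Adj y z ∧ P z = false ∧ ¬ Integrated G P z).card ≤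
      (Gamma G P x).card :=
  stmt15_general G P hsat y hy hyni x hx
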